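/- For every μ > -1, the functionals G_{j,μ}(f) = ∫₀¹ t^μ(1-t)^μ f(t mⱼ + (1-t) m*) dt (j = 1,2,3) together with the three edge averages are unisolvent on ℙ₂: any polynomial of degree ≤ 2 annihilated by all six functionals is zero. -/

import Mathlib

open MeasureTheory

/-- Edge midpoints of the triangle. -/
noncomputable def midpt (v : Fin 3 → (Fin 2 → ℝ)) (j : Fin 3) : Fin 2 → ℝ :=
  (v (j + 1) + v (j + 2)) / 2

/-- Barycenter of the triangle. -/
noncomputable def barycen (v : Fin 3 → (Fin 2 → ℝ)) : Fin 2 → ℝ :=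
  (v 0 + v 1 + v 2) / 3

/-!
Pull `p` back along the affine chart `z ↦ v₀ + z₀ • (v₁ - v₀) + z₁ • (v₂ - v₀)`, which is onto
because the vertices are affinely independent: it becomes a quadratic `q` with six coefficients on
the reference triangle `(0,0), (1,0), (0,1)`. On a segment with midpoint `m` and direction `d`,
`q = q m + β s + Q d * s²` with `s = t - 1/2` and `Q` the quadratic part of `q`. The odd term
integrates to zero against any weight symmetric about `1/2`, so the edge averages are
`q m + Q d / 12` and the weighted functionals are `P * q m + D * Q d`, where `P = ∫ w > 0` and
`0 ≤ D = ∫ w (t - 1/2)² ≤ P / 4`. The resulting 6 × 6 system for the coefficients has determinant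
a nonzero constant times `(P + 4D)² (7P - 4D)`, and both factors are positive.
-/

open MvPolynomial intervalIntegral

namespace MvPolynomial

theorem totalDegree_bind₁_le {σ τ R : Type*} [CommSemiring R] {f : σ → MvPolynomial τ R}
    (hf : ∀ i, (f i).totalDegree ≤ 1) (p : MvPolynomial σ R) :
    (bind₁ f p).totalDegree ≤ p.totalDegree := by
  conv_lhs => rw [p.as_sum]
  rw [map_sum]
  refine totalDegree_finsetSum_le fun d hd => ?_
  rw [bind₁_monomial]
  calc (C (coeff d p) * ∏ i ∈ d.support, f i ^ d i).totalDegree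
      ≤ ∑ i ∈ d.support, (f i ^ d i).totalDegree := by
        refine (totalDegree_mul _ _).trans ?_
        rw [totalDegree_C, zero_add]
        exact totalDegree_finsetProd _ _
    _ ≤ ∑ i ∈ d.support, d i := Finset.sum_le_sum fun i _ =>
        (totalDegree_pow _ _).trans (by simpa using Nat.mul_le_mul_left (d i) (hf i))
    _ ≤ p.totalDegree := le_totalDegree hd

theorem exists_totalDegree_le_one_eval_eq {R ι : Type*} [CommRing R] [Fintype ι] [DecidableEq ι]
    (A : (ι → R) →ᵃ[R] (ι → R)) (i : ι) :
    ∃ q : MvPolynomial ι R, q.totalDegree ≤ 1 ∧ ∀ z, eval z q = A z i := by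
  refine ⟨C (A 0 i) + ∑ k, monomial (Finsupp.single k 1) (A.linear (Pi.single k 1) i), ?_,
    fun z => ?_⟩
  · refine (totalDegree_add _ _).trans (max_le (by simp) (totalDegree_finsetSum_le fun k _ => ?_))
    exact (totalDegree_monomial_le _ _).trans (by simp)
  · have hz : z = ∑ k, z k • Pi.single k 1 := by ext; simp [Pi.single_apply]
    conv_rhs => rw [congrFun A.decomp z, hz]
    simp [eval_monomial, add_comm, mul_comm]

end MvPolynomial

def quadratic {R : Type*} [CommRing R] (c : Fin 6 → R) (z : Fin 2 → R) : R :=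
  c 0 + c 1 * z 0 + c 2 * z 1 + c 3 * z 0 ^ 2 + c 4 * (z 0 * z 1) + c 5 * z 1 ^ 2

def quadraticPart {R : Type*} [CommRing R] (c : Fin 6 → R) (z : Fin 2 → R) : R :=
  c 3 * z 0 ^ 2 + c 4 * (z 0 * z 1) + c 5 * z 1 ^ 2

theorem exists_eval_eq_quadratic {R : Type*} [CommRing R] {p : MvPolynomial (Fin 2) R}
    (hp : p.totalDegree ≤ 2) : ∃ c, ∀ z, eval z p = quadratic c z := by
  classical
  set S : Finset (Fin 2 →₀ ℕ) := {0, Finsupp.single 0 1, Finsupp.single 1 1, Finsupp.single 0 2,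
    Finsupp.single 0 1 + Finsupp.single 1 1, Finsupp.single 1 2}
  have hS : p.support ⊆ S := by
    intro m hm
    have hdeg : m 0 + m 1 ≤ 2 := by
      simpa [Finsupp.sum_fintype] using (le_totalDegree hm).trans hp
    have hm : m = Finsupp.single 0 (m 0) + Finsupp.single 1 (m 1) := by
      ext i; fin_cases i <;> simp
    rw [hm]
    have : m 0 ≤ 2 := by omega
    have : m 1 ≤ 2 := by omega
    interval_cases m 0 <;> interval_cases m 1 <;> simp_all [S]
  refine ⟨![coeff 0 p, coeff (Finsupp.single 0 1) p, coeff (Finsupp.single 1 1) p,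
    coeff (Finsupp.single 0 2) p, coeff (Finsupp.single 0 1 + Finsupp.single 1 1) p,
    coeff (Finsupp.single 1 2) p], fun z => ?_⟩
  rw [eval_eq', Finset.sum_subset hS (fun d _ hd => by simp [notMem_support_iff.mp hd])]
  simp [S, quadratic, Finset.sum_insert, Finsupp.ext_iff, Fin.forall_fin_two, Finsupp.single_apply,
    add_assoc]

theorem exists_eval_affineMap_eq_quadratic {R : Type*} [CommRing R] {p : MvPolynomial (Fin 2) R}
    (hp : p.totalDegree ≤ 2) (A : (Fin 2 → R) →ᵃ[R] (Fin 2 → R)) :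
    ∃ c, ∀ z, eval (A z) p = quadratic c z := by
  choose q hq_deg hq_eval using exists_totalDegree_le_one_eval_eq A
  obtain ⟨c, hc⟩ := exists_eval_eq_quadratic ((totalDegree_bind₁_le hq_deg p).trans hp)
  refine ⟨c, fun z => ?_⟩
  rw [← hc, show eval z (bind₁ q p) = eval (fun i => eval z (q i)) p from eval₂Hom_bind₁ _ _ _ _]
  simp only [hq_eval]

theorem exists_quadratic_segment_eq_centered (c : Fin 6 → ℝ) (a b : Fin 2 → ℝ) :
    ∃ β, ∀ t : ℝ, quadratic c (t • a + (1 - t) • b)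
      = quadratic c ((a + b) / 2) + β * (t - 1 / 2) + quadraticPart c (a - b) * (t - 1 / 2) ^ 2 := by
  refine ⟨c 1 * (a 0 - b 0) + c 2 * (a 1 - b 1) + c 3 * (a 0 ^ 2 - b 0 ^ 2)
    + c 4 * (a 0 * a 1 - b 0 * b 1) + c 5 * (a 1 ^ 2 - b 1 ^ 2), fun t => ?_⟩
  simp only [quadratic, quadraticPart, Pi.add_apply, Pi.sub_apply, Pi.smul_apply, Pi.div_apply,
    Pi.ofNat_apply, smul_eq_mul]
  ring

theorem integral_mul_centered_quadratic_of_symm {w : ℝ → ℝ} (hw : IntervalIntegrable w volume 0 1)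
    (hsymm : ∀ t, w (1 - t) = w t) (α β γ : ℝ) :
    ∫ t in (0:ℝ)..1, w t * (α + β * (t - 1 / 2) + γ * (t - 1 / 2) ^ 2)
      = α * (∫ t in (0:ℝ)..1, w t) + γ * ∫ t in (0:ℝ)..1, w t * (t - 1 / 2) ^ 2 := by
  have hodd : ∫ t in (0:ℝ)..1, w t * (t - 1 / 2) = 0 := by
    have h := integral_comp_sub_left (fun t => w t * (t - 1 / 2)) (a := 0) (b := 1) 1
    have hneg : ∀ t : ℝ, w (1 - t) * (1 - t - 1 / 2) = -(w t * (t - 1 / 2)) := fun t => by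
      rw [hsymm]; ring
    simp only [hneg, intervalIntegral.integral_neg, sub_zero, sub_self] at h
    linarith
  have h₁ : IntervalIntegrable (fun t => w t * (t - 1 / 2)) volume 0 1 :=
    hw.mul_continuousOn (by fun_prop)
  have h₂ : IntervalIntegrable (fun t => w t * (t - 1 / 2) ^ 2) volume 0 1 :=
    hw.mul_continuousOn (by fun_prop)
  have hsplit : ∀ t : ℝ, w t * (α + β * (t - 1 / 2) + γ * (t - 1 / 2) ^ 2)
      = α * w t + β * (w t * (t - 1 / 2)) + γ * (w t * (t - 1 / 2) ^ 2) := fun t => by ring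
  simp_rw [hsplit]
  rw [intervalIntegral.integral_add ((hw.const_mul α).add (h₁.const_mul β)) (h₂.const_mul γ),
    intervalIntegral.integral_add (hw.const_mul α) (h₁.const_mul β),
    intervalIntegral.integral_const_mul, intervalIntegral.integral_const_mul,
    intervalIntegral.integral_const_mul, hodd, mul_zero, add_zero]

theorem integral_centered_quadratic (α β γ : ℝ) :
    ∫ t in (0:ℝ)..1, (α + β * (t - 1 / 2) + γ * (t - 1 / 2) ^ 2) = α + γ / 12 := by
  have h := integral_mul_centered_quadratic_of_symm (w := fun _ => 1) intervalIntegrable_const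
    (fun _ => rfl) α β γ
  have hsq : ∫ t in (0:ℝ)..1, (t - 1 / 2) ^ 2 = 1 / 12 := by
    rw [integral_comp_sub_right (fun t => t ^ 2)]
    norm_num [integral_pow]
  simp only [one_mul, intervalIntegral.integral_const, hsq, sub_zero, smul_eq_mul, mul_one] at h
  linear_combination h

theorem integral_quadratic_segment (c : Fin 6 → ℝ) (a b : Fin 2 → ℝ) :
    ∫ t in (0:ℝ)..1, quadratic c (t • a + (1 - t) • b)
      = quadratic c ((a + b) / 2) + quadraticPart c (a - b) / 12 := by
  obtain ⟨β, hβ⟩ := exists_quadratic_segment_eq_centered c a b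
  simp_rw [hβ]
  exact integral_centered_quadratic _ _ _

section JacobiWeight

variable {μ : ℝ}

theorem intervalIntegrable_jacobiWeight (hμ : -1 < μ) :
    IntervalIntegrable (fun t : ℝ => t ^ μ * (1 - t) ^ μ) volume 0 1 := by
  have hcont : ContinuousOn (fun t : ℝ => (1 - t) ^ μ) (Set.uIcc 0 (1 / 2)) := by
    refine ContinuousOn.rpow_const (by fun_prop) fun t ht => Or.inl ?_
    rw [Set.uIcc_of_le (by norm_num)] at ht
    linarith [ht.2]
  have hleft : IntervalIntegrable (fun t : ℝ => t ^ μ * (1 - t) ^ μ) volume 0 (1 / 2) :=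
    (intervalIntegrable_rpow' hμ).mul_continuousOn hcont
  have hright : IntervalIntegrable (fun t : ℝ => t ^ μ * (1 - t) ^ μ) volume (1 / 2) 1 := by
    convert (hleft.comp_sub_left 1).symm using 1 <;> norm_num [mul_comm]
  exact hleft.trans hright

theorem integral_jacobiWeight_pos (hμ : -1 < μ) : 0 < ∫ t in (0:ℝ)..1, t ^ μ * (1 - t) ^ μ :=
  intervalIntegral_pos_of_pos_on (intervalIntegrable_jacobiWeight hμ)
    (fun t ht => mul_pos (Real.rpow_pos_of_pos ht.1 μ) (Real.rpow_pos_of_pos (by linarith [ht.2]) μ))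
    zero_lt_one

theorem integral_jacobiWeight_mul_sq_nonneg :
    0 ≤ ∫ t in (0:ℝ)..1, t ^ μ * (1 - t) ^ μ * (t - 1 / 2) ^ 2 :=
  integral_nonneg zero_le_one fun t ht => mul_nonneg
    (mul_nonneg (Real.rpow_nonneg ht.1 μ) (Real.rpow_nonneg (by linarith [ht.2]) μ)) (sq_nonneg _)

theorem four_mul_integral_jacobiWeight_mul_sq_le (hμ : -1 < μ) :
    4 * ∫ t in (0:ℝ)..1, t ^ μ * (1 - t) ^ μ * (t - 1 / 2) ^ 2
      ≤ ∫ t in (0:ℝ)..1, t ^ μ * (1 - t) ^ μ := by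
  have hw := intervalIntegrable_jacobiWeight hμ
  rw [← intervalIntegral.integral_const_mul]
  refine integral_mono_on zero_le_one ((hw.mul_continuousOn (by fun_prop)).const_mul 4) hw
    fun t ht => ?_
  have hw0 : 0 ≤ t ^ μ * (1 - t) ^ μ :=
    mul_nonneg (Real.rpow_nonneg ht.1 μ) (Real.rpow_nonneg (by linarith [ht.2]) μ)
  have hsq : 4 * (t - 1 / 2) ^ 2 ≤ 1 := by nlinarith [ht.1, ht.2]
  nlinarith [mul_le_mul_of_nonneg_left hsq hw0]

theorem integral_jacobiWeight_mul_quadratic_segment (hμ : -1 < μ) (c : Fin 6 → ℝ)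
    (a b : Fin 2 → ℝ) :
    ∫ t in (0:ℝ)..1, t ^ μ * (1 - t) ^ μ * quadratic c (t • a + (1 - t) • b)
      = (∫ t in (0:ℝ)..1, t ^ μ * (1 - t) ^ μ) * quadratic c ((a + b) / 2)
        + (∫ t in (0:ℝ)..1, t ^ μ * (1 - t) ^ μ * (t - 1 / 2) ^ 2) * quadraticPart c (a - b) := by
  obtain ⟨β, hβ⟩ := exists_quadratic_segment_eq_centered c a b
  simp_rw [hβ]
  rw [integral_mul_centered_quadratic_of_symm (intervalIntegrable_jacobiWeight hμ)
    (fun t => by rw [sub_sub_cancel, mul_comm])]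
  ring

end JacobiWeight

def refTriangle : Fin 3 → (Fin 2 → ℝ) := ![![0, 0], ![1, 0], ![0, 1]]

noncomputable def triangleChart {E : Type*} [AddCommGroup E] [Module ℝ E] (v : Fin 3 → E) :
    (Fin 2 → ℝ) →ᵃ[ℝ] E :=
  (Fintype.linearCombination ℝ fun i : Fin 2 => v i.succ - v 0).toAffineMap
    + AffineMap.const ℝ _ (v 0)

theorem triangleChart_refTriangle {E : Type*} [AddCommGroup E] [Module ℝ E] (v : Fin 3 → E)
    (i : Fin 3) : triangleChart v (refTriangle i) = v i := by
  fin_cases i <;> simp [triangleChart, refTriangle, Fintype.linearCombination_apply]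

theorem triangleChart_surjective {E : Type*} [AddCommGroup E] [Module ℝ E] [FiniteDimensional ℝ E]
    (hE : Module.finrank ℝ E = 2) {v : Fin 3 → E} (hv : AffineIndependent ℝ v) :
    Function.Surjective (triangleChart v) := by
  have hli : LinearIndependent ℝ fun i : Fin 2 => v i.succ - v 0 :=
    ((affineIndependent_iff_linearIndependent_vsub ℝ v 0).mp hv).comp
      (fun i => ⟨i.succ, Fin.succ_ne_zero i⟩)
      fun i j h => Fin.succ_injective _ (congrArg Subtype.val h)
  have hL := (LinearMap.injective_iff_surjective_of_finrank_eq_finrank (by simp [hE])).mp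
    (linearIndependent_iff_injective_fintypeLinearCombination.mp hli)
  intro y
  obtain ⟨z, hz⟩ := hL (y - v 0)
  exact ⟨z, by simp [triangleChart, hz]⟩

theorem midpt_comp (A : (Fin 2 → ℝ) →ᵃ[ℝ] (Fin 2 → ℝ)) (v : Fin 3 → (Fin 2 → ℝ)) (j : Fin 3) :
    midpt (A ∘ v) j = A (midpt v j) := by
  have h : ∀ a b : Fin 2 → ℝ, (a + b) / 2 = (1 / 2 : ℝ) • a + (1 / 2 : ℝ) • b := by
    intro a b; funext i
    simp only [Pi.div_apply, Pi.add_apply, Pi.ofNat_apply, Pi.smul_apply, smul_eq_mul]; ring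
  simp only [midpt, h, Function.comp,
    Convex.combo_affine_apply (by norm_num : (1 / 2 : ℝ) + 1 / 2 = 1)]

theorem barycen_comp (A : (Fin 2 → ℝ) →ᵃ[ℝ] (Fin 2 → ℝ)) (v : Fin 3 → (Fin 2 → ℝ)) :
    barycen (A ∘ v) = A (barycen v) := by
  have h : ∀ a b c : Fin 2 → ℝ,
      (a + b + c) / 3 = (1 / 3 : ℝ) • a + (2 / 3 : ℝ) • ((1 / 2 : ℝ) • b + (1 / 2 : ℝ) • c) := by
    intro a b c; funext i
    simp only [Pi.div_apply, Pi.add_apply, Pi.ofNat_apply, Pi.smul_apply, smul_eq_mul]; ring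
  simp only [barycen, h, Function.comp,
    Convex.combo_affine_apply (by norm_num : (1 / 2 : ℝ) + 1 / 2 = 1),
    Convex.combo_affine_apply (by norm_num : (1 / 3 : ℝ) + 2 / 3 = 1)]

theorem eq_zero_of_refTriangle_functionals (c : Fin 6 → ℝ) {P D : ℝ} (hP : 0 < P) (hD : 0 ≤ D)
    (hDP : 4 * D ≤ P)
    (hedge : ∀ j, quadratic c (midpt refTriangle j)
      + quadraticPart c (refTriangle (j + 1) - refTriangle (j + 2)) / 12 = 0)
    (hG : ∀ j, P * quadratic c ((midpt refTriangle j + barycen refTriangle) / 2)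
      + D * quadraticPart c (midpt refTriangle j - barycen refTriangle) = 0) :
    c = 0 := by
  have e0 := hedge 0
  have e1 := hedge 1
  have e2 := hedge 2
  have g0 := hG 0
  have g1 := hG 1
  have g2 := hG 2
  simp [quadratic, quadraticPart, midpt, barycen, refTriangle, Matrix.cons_val]
    at e0 e1 e2 g0 g1 g2
  have h3 : c 3 = -3 * c 0 - 3 / 2 * c 1 := by linarith
  have h4 : c 4 = 6 * c 0 := by linarith
  have h5 : c 5 = -3 * c 0 - 3 / 2 * c 2 := by linarith
  rw [h3, h4, h5] at g0 g1 g2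
  have hPD : 0 < P + 4 * D := by linarith
  have hdet : 0 < (7 * P - 4 * D) * (P + 4 * D) := mul_pos (by linarith) hPD
  have h21 : c 2 = c 1 := by
    have : (P + 4 * D) * (c 1 - c 2) = 0 := by linear_combination (-32) * g1 + 32 * g2
    have := (mul_eq_zero.mp this).resolve_left hPD.ne'
    linarith
  rw [h21] at g0 g1
  -- Cramer's rule for the 2 × 2 system `g0`, `g1` in the unknowns `c 0` and `c 1`.
  have h0 : c 0 = 0 := by
    have : (7 * P - 4 * D) * (P + 4 * D) * c 0 = 0 := by
      linear_combination (72 * P - 160 / 3 * D) * g0 + (-80 * P + 64 / 3 * D) * g1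
    exact (mul_eq_zero.mp this).resolve_left hdet.ne'
  have h1 : c 1 = 0 := by
    have : (7 * P - 4 * D) * (P + 4 * D) * c 1 = 0 := by
      linear_combination 256 * P * g1 - (208 * P - 192 * D) * g0
    exact (mul_eq_zero.mp this).resolve_left hdet.ne'
  funext i
  fin_cases i <;> simp [h0, h1, h21, h3, h4, h5]

theorem second_class_unisolvence
    (v : Fin 3 → (Fin 2 → ℝ)) (hv : AffineIndependent ℝ v)
    (μ : ℝ) (hμ : -1 < μ)
    (p : MvPolynomial (Fin 2) ℝ) (hp : p.totalDegree ≤ 2)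
    (hedge : ∀ j : Fin 3,
      (∫ t in (0:ℝ)..1,
        MvPolynomial.eval (t • v (j + 1) + (1 - t) • v (j + 2)) p) = 0)
    (hG : ∀ j : Fin 3,
      (∫ t in (0:ℝ)..1, t ^ μ * (1 - t) ^ μ *
        MvPolynomial.eval (t • midpt v j + (1 - t) • barycen v) p) = 0) :
    p = 0 := by
  set A := triangleChart v
  obtain ⟨c, hc⟩ := exists_eval_affineMap_eq_quadratic hp A
  have hv_eq : v = A ∘ refTriangle := funext fun i => (triangleChart_refTriangle v i).symm
  have hcombo : ∀ (a b : Fin 2 → ℝ) (t : ℝ), t • A a + (1 - t) • A b = A (t • a + (1 - t) • b) :=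
    fun a b t => (Convex.combo_affine_apply (add_sub_cancel t 1)).symm
  have hc_zero : c = 0 := by
    refine eq_zero_of_refTriangle_functionals c (integral_jacobiWeight_pos hμ)
      integral_jacobiWeight_mul_sq_nonneg (four_mul_integral_jacobiWeight_mul_sq_le hμ)
      (fun j => ?_) (fun j => ?_)
    · refine (integral_quadratic_segment c _ _).symm.trans ?_
      simpa [hv_eq, hcombo, hc] using hedge j
    · refine (integral_jacobiWeight_mul_quadratic_segment hμ c _ _).symm.trans ?_
      simpa [hv_eq, midpt_comp, barycen_comp, hcombo, hc] using hG j
  refine MvPolynomial.funext fun y => ?_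
  obtain ⟨z, rfl⟩ : ∃ z, A z = y := triangleChart_surjective (by simp) hv y
  simp [hc, hc_zero, quadratic]
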